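/- For every p with 0 < p < 1/2, there exist real numbers r, R, k satisfying all of: R = 1; sqrt(2) < r ≤ 2; R ∈ [1, r² - 1); R > r(r-2); k > p(r-1)²; k ≤ p(r² - R); and k ≤ min{p(R + (r-1)²), p((r²-1) - R) + (1-2p)((r-1)² - R)}. That is, the parameter set Ω supporting simultaneously the pooling equilibrium under full menu, the informative equilibrium under no compromise, and the informative equilibrium under change is nonempty. -/
import Mathlib


theorem Omega_nonempty (p : ℝ) (hp0 : 0 < p) (hp : p < 1/2) :
    ∃ r R k : ℝ, R = 1 ∧ Real.sqrt 2 < r ∧ r ≤ 2 ∧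
      1 ≤ R ∧ R < r^2 - 1 ∧ R > r * (r - 2) ∧
      k > p * (r - 1)^2 ∧ k ≤ p * (r^2 - R) ∧
      k ≤ min (p * (R + (r - 1)^2))
        (p * ((r^2 - 1) - R) + (1 - 2*p) * ((r - 1)^2 - R)) := by
  refine ⟨2, 1, 2 * p, rfl, ?_, le_refl 2, le_refl 1, by norm_num, by norm_num,
    by nlinarith, by nlinarith, ?_⟩
  · have h := Real.sq_sqrt (by norm_num : (2:ℝ) ≥ 0)
    nlinarith [Real.sqrt_nonneg 2]
  · simp only [le_min_iff]
    constructor <;> nlinarith
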